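/- arXiv:1901.01179 — 4 statements merged into one kernel-verified Lean document; each statement's English description precedes it below -/
import Mathlib

section
/- For any càdlàg function f : [0,1] → E into a metric space (E,d) and any 0 ≤ σ < τ ≤ 1, the moduli Δ(f;(σ,τ)) = sup_{σ≤s≤t≤u≤τ} d(f(s),f(t)) ∧ d(f(t),f(u)) and N(f;(σ,τ)) = inf_{σ<θ≤τ} sup_{s∈[σ,θ), u∈[θ,τ]} [d(f(σ),f(s)) ∨ d(f(u),f(τ))] satisfy (1/2)·N(f;(σ,τ)) ≤ Δ(f;(σ,τ)) ≤ 2·N(f;(σ,τ)). -/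
open MeasureTheory Set Filter

noncomputable section

/-- `f` is càdlàg on `[0,1]`: right-continuous on `[0,1)` and with left limits on `(0,1]`. -/
def IsCadlagOn {E : Type*} [MetricSpace E] (f : ℝ → E) : Prop :=
  (∀ t ∈ Set.Ico (0:ℝ) 1, ContinuousWithinAt f (Set.Ici t) t) ∧
  (∀ t ∈ Set.Ioc (0:ℝ) 1, ∃ l : E, Filter.Tendsto f (nhdsWithin t (Set.Iio t)) (nhds l))

/-- `Δ(f;s,t,u) = d(f(s),f(t)) ∧ d(f(t),f(u))`. -/
def tripleDelta {E : Type*} [MetricSpace E] (f : ℝ → E) (s t u : ℝ) : ℝ :=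
  min (dist (f s) (f t)) (dist (f t) (f u))

/-- Standard modulus of càdlàguity `Δ(f;(σ,τ))`. -/
def deltaMod {E : Type*} [MetricSpace E] (f : ℝ → E) (σ τ : ℝ) : ℝ :=
  sSup {x : ℝ | ∃ s t u : ℝ, σ ≤ s ∧ s ≤ t ∧ t ≤ u ∧ u ≤ τ ∧ x = tripleDelta f s t u}

/-- Fernique's modulus `N(f;(σ,τ))`. -/
def fernMod {E : Type*} [MetricSpace E] (f : ℝ → E) (σ τ : ℝ) : ℝ :=
  sInf {x : ℝ | ∃ θ : ℝ, σ < θ ∧ θ ≤ τ ∧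
    x = sSup {y : ℝ | ∃ s u : ℝ, σ ≤ s ∧ s < θ ∧ θ ≤ u ∧ u ≤ τ ∧
      y = max (dist (f σ) (f s)) (dist (f u) (f τ))}}

/-- `N(f;η) = sup_{0 < τ - σ ≤ η} N(f;(σ,τ))` (with `0 ≤ σ < τ ≤ 1`). -/
def fernEta {E : Type*} [MetricSpace E] (f : ℝ → E) (η : ℝ) : ℝ :=
  sSup {x : ℝ | ∃ σ τ : ℝ, 0 ≤ σ ∧ σ < τ ∧ τ ≤ 1 ∧ τ - σ ≤ η ∧ x = fernMod f σ τ}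

/-- The set of quotients defining `[f]_μ`. -/
def holderSet {E : Type*} [MetricSpace E] (μ : ℝ) (f : ℝ → E) : Set ℝ :=
  {x : ℝ | ∃ s t u : ℝ, 0 ≤ s ∧ s ≤ t ∧ t ≤ u ∧ u ≤ 1 ∧
    x = tripleDelta f s t u / (u - s) ^ μ}

/-- `[f]_μ`. -/
def holderSemi {E : Type*} [MetricSpace E] (μ : ℝ) (f : ℝ → E) : ℝ :=
  sSup (holderSet μ f)

/-- The set of quotients defining `|f]_μ`. -/
def leftSet {E : Type*} [MetricSpace E] (μ : ℝ) (f : ℝ → E) : Set ℝ :=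
  {x : ℝ | ∃ t : ℝ, 0 < t ∧ t ≤ 1 ∧ x = dist (f 0) (f t) / t ^ μ}

/-- `|f]_μ = sup_{t ∈ (0,1]} d(f(0),f(t))/t^μ`. -/
def leftSemi {E : Type*} [MetricSpace E] (μ : ℝ) (f : ℝ → E) : ℝ :=
  sSup (leftSet μ f)

/-- The set of quotients defining `[f|_μ`. -/
def rightSet {E : Type*} [MetricSpace E] (μ : ℝ) (f : ℝ → E) : Set ℝ :=
  {x : ℝ | ∃ t : ℝ, 0 ≤ t ∧ t < 1 ∧ x = dist (f 1) (f t) / (1 - t) ^ μ}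

/-- `[f|_μ = sup_{t ∈ [0,1)} d(f(1),f(t))/(1-t)^μ`. -/
def rightSemi {E : Type*} [MetricSpace E] (μ : ℝ) (f : ℝ → E) : ℝ :=
  sSup (rightSet μ f)

/-- `[f]_{~μ} = sup_{η > 0} N(f;η)/η^μ`. -/
def tildeSemi {E : Type*} [MetricSpace E] (μ : ℝ) (f : ℝ → E) : ℝ :=
  sSup {x : ℝ | ∃ η : ℝ, 0 < η ∧ x = fernEta f η / η ^ μ}

/-- `[f]_{^μ} = sup_{0 < s < u ≤ 1} Δ(f;s,(s+u)/2,u)/(u-s)^μ`. -/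
def midSemi {E : Type*} [MetricSpace E] (μ : ℝ) (f : ℝ → E) : ℝ :=
  sSup {x : ℝ | ∃ s u : ℝ, 0 < s ∧ s < u ∧ u ≤ 1 ∧
    x = tripleDelta f s ((s + u) / 2) u / (u - s) ^ μ}

/-- Membership in `D^μ([0,1],E)`: càdlàg with finite Hölder-type seminorms. -/
def MemDHolder {E : Type*} [MetricSpace E] (μ : ℝ) (f : ℝ → E) : Prop :=
  IsCadlagOn f ∧ BddAbove (holderSet μ f) ∧ BddAbove (leftSet μ f) ∧
    BddAbove (rightSet μ f)

/-- `[[f]]_{μ,p}^p`, the triple-integral quantity. -/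
def tripleIntP {E : Type*} [MetricSpace E] (μ p : ℝ) (f : ℝ → E) : ℝ :=
  ∫ q in {q : ℝ × ℝ × ℝ | 0 ≤ q.1 ∧ q.1 < q.2.1 ∧ q.2.1 < q.2.2 ∧ q.2.2 ≤ 1},
    tripleDelta f q.1 q.2.1 q.2.2 ^ p / (q.2.2 - q.1) ^ (μ * p + 3)

/-- `[[f]]_{μ,p}`. -/
def tripleSemi {E : Type*} [MetricSpace E] (μ p : ℝ) (f : ℝ → E) : ℝ :=
  tripleIntP μ p f ^ (1 / p)

/-- `||f]]_{μ,p}^p`. -/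
def leftIntP {E : Type*} [MetricSpace E] (μ p : ℝ) (f : ℝ → E) : ℝ :=
  ∫ t in (0:ℝ)..1, dist (f 0) (f t) ^ p / t ^ (μ * p + 1)

/-- `||f]]_{μ,p}`. -/
def leftIntSemi {E : Type*} [MetricSpace E] (μ p : ℝ) (f : ℝ → E) : ℝ :=
  leftIntP μ p f ^ (1 / p)

/-- `[[f||_{μ,p}^p`. -/
def rightIntP {E : Type*} [MetricSpace E] (μ p : ℝ) (f : ℝ → E) : ℝ :=
  ∫ t in (0:ℝ)..1, dist (f 1) (f t) ^ p / (1 - t) ^ (μ * p + 1)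

/-- `[[f||_{μ,p}`. -/
def rightIntSemi {E : Type*} [MetricSpace E] (μ p : ℝ) (f : ℝ → E) : ℝ :=
  rightIntP μ p f ^ (1 / p)

/-- The sup over `[0,1]` of the norm of an `ℝ^d`-valued function. -/
def supNorm {k : ℕ} (f : ℝ → EuclideanSpace ℝ (Fin k)) : ℝ :=
  sSup {x : ℝ | ∃ t : ℝ, 0 ≤ t ∧ t ≤ 1 ∧ x = ‖f t‖}

/-- Dyadic projection `π_n`. -/
def dyadicProj (n : ℕ) (t : ℝ) : ℝ :=
  if t = 1 then 1 - 1 / 2 ^ n else (⌊t * 2 ^ n⌋ : ℝ) / 2 ^ n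

/-!
`Δ ≤ 2N`: fix a split point `θ`. Of `s ≤ t ≤ u`, either `s, t < θ`, and then
`d(f s, f t) ≤ d(f σ, f s) + d(f σ, f t)`, or `θ ≤ t, u`, and then
`d(f t, f u) ≤ d(f t, f τ) + d(f u, f τ)`.

`N ≤ 2Δ`: let `θ₀` be the supremum of the `t` with `d(f σ, f t) ≤ Δ`. For `s < θ₀` pick such a
`t > s`; the triple `(σ, s, t)` gives `d(f σ, f s) ≤ 2Δ`. For `u > θ₀` the triple `(σ, u, τ)`
gives `d(f u, f τ) ≤ Δ`, and right continuity extends this to `u = θ₀`. So `θ₀` is a good split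
point, unless `θ₀ = σ`; then split just right of `σ`, where `d(f σ, f s)` is small.

A càdlàg function is bounded on the compact interval `[0,1]`, so all the suprema involved are
genuine ones rather than the junk value `sSup = 0` of unbounded sets.
-/

open Bornology Topology

section

variable {E : Type*} [MetricSpace E]

theorem IsCadlagOn.isBounded_image_Icc {f : ℝ → E} (hf : IsCadlagOn f) :
    IsBounded (f '' Icc 0 1) := by
  refine isCompact_Icc.induction_on (p := fun s => IsBounded (f '' s)) (by simp)
    (fun s t hst ht => ht.subset (image_mono hst))
    (fun s t hs ht => by rw [image_union]; exact hs.union ht) fun x hx => ?_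
  obtain ⟨s, hs, hsb⟩ : ∃ s ∈ 𝓝[Ico 0 x] x, IsBounded (f '' s) := by
    obtain rfl | hx0 := hx.1.eq_or_lt
    · exact ⟨∅, by simp, by simp⟩
    · obtain ⟨l, hl⟩ := hf.2 x ⟨hx0, hx.2⟩
      exact Metric.exists_isBounded_image_of_tendsto
        (hl.mono_left (nhdsWithin_mono _ Ico_subset_Iio_self))
  obtain ⟨t, ht, htb⟩ : ∃ t ∈ 𝓝[Icc x 1] x, IsBounded (f '' t) := by
    obtain rfl | hx1 := hx.2.eq_or_lt
    · exact ⟨{1}, by simp, by simp⟩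
    · exact Metric.exists_isBounded_image_of_tendsto
        ((hf.1 x ⟨hx.1, hx1⟩).mono Icc_subset_Ici_self)
  refine ⟨s ∪ t, ?_, by rw [image_union]; exact hsb.union htb⟩
  rw [← Ico_union_Icc_eq_Icc hx.1 hx.2, nhdsWithin_union]
  exact union_mem_sup hs ht

def fernSplit (f : ℝ → E) (σ τ θ : ℝ) : ℝ :=
  sSup {y : ℝ | ∃ s u : ℝ, σ ≤ s ∧ s < θ ∧ θ ≤ u ∧ u ≤ τ ∧
    y = max (dist (f σ) (f s)) (dist (f u) (f τ))}

variable (f : ℝ → E) {σ τ θ a : ℝ}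

theorem fernMod_eq_sInf_fernSplit :
    fernMod f σ τ = sInf {x | ∃ θ, σ < θ ∧ θ ≤ τ ∧ x = fernSplit f σ τ θ} :=
  rfl

theorem fernSplit_nonneg : 0 ≤ fernSplit f σ τ θ :=
  Real.sSup_nonneg (by rintro _ ⟨s, u, -, -, -, -, rfl⟩; positivity)

theorem fernMod_le_fernSplit (hθ : θ ∈ Ioc σ τ) : fernMod f σ τ ≤ fernSplit f σ τ θ := by
  rw [fernMod_eq_sInf_fernSplit]
  exact csInf_le ⟨0, by rintro _ ⟨θ, -, -, rfl⟩; exact fernSplit_nonneg f⟩ ⟨θ, hθ.1, hθ.2, rfl⟩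

theorem le_fernMod (hστ : σ < τ) (h : ∀ θ ∈ Ioc σ τ, a ≤ fernSplit f σ τ θ) :
    a ≤ fernMod f σ τ := by
  rw [fernMod_eq_sInf_fernSplit]
  exact le_csInf ⟨_, τ, hστ, le_rfl, rfl⟩ (by rintro _ ⟨θ, h₁, h₂, rfl⟩; exact h θ ⟨h₁, h₂⟩)

theorem fernSplit_le (ha : 0 ≤ a) (hl : ∀ s ∈ Ico σ θ, dist (f σ) (f s) ≤ a)
    (hr : ∀ u ∈ Icc θ τ, dist (f u) (f τ) ≤ a) : fernSplit f σ τ θ ≤ a :=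
  Real.sSup_le (by
    rintro _ ⟨s, u, hσs, hsθ, hθu, huτ, rfl⟩
    exact max_le (hl s ⟨hσs, hsθ⟩) (hr u ⟨hθu, huτ⟩)) ha

theorem max_dist_le_fernSplit (hb : IsBounded (f '' Icc σ τ)) {s u : ℝ} (hσs : σ ≤ s)
    (hsθ : s < θ) (hθu : θ ≤ u) (huτ : u ≤ τ) :
    max (dist (f σ) (f s)) (dist (f u) (f τ)) ≤ fernSplit f σ τ θ := by
  obtain ⟨C, hC⟩ := Metric.isBounded_iff.1 hb
  have hmem : ∀ {v}, σ ≤ v → v ≤ τ → f v ∈ f '' Icc σ τ := fun h₁ h₂ =>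
    mem_image_of_mem f ⟨h₁, h₂⟩
  refine le_csSup ⟨C, ?_⟩ ⟨s, u, hσs, hsθ, hθu, huτ, rfl⟩
  rintro _ ⟨s', u', hσs', hs'θ, hθu', hu'τ, rfl⟩
  have hσu' := hσs'.trans (hs'θ.le.trans hθu')
  exact max_le (hC (hmem le_rfl (hσu'.trans hu'τ)) (hmem hσs' ((hs'θ.le.trans hθu').trans hu'τ)))
    (hC (hmem hσu' hu'τ) (hmem (hσu'.trans hu'τ) le_rfl))

theorem deltaMod_nonneg : 0 ≤ deltaMod f σ τ :=
  Real.sSup_nonneg (by rintro _ ⟨s, t, u, -, -, -, -, rfl⟩; exact le_min dist_nonneg dist_nonneg)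

theorem tripleDelta_le_deltaMod (hb : IsBounded (f '' Icc σ τ)) {s t u : ℝ} (hσs : σ ≤ s)
    (hst : s ≤ t) (htu : t ≤ u) (huτ : u ≤ τ) : tripleDelta f s t u ≤ deltaMod f σ τ := by
  obtain ⟨C, hC⟩ := Metric.isBounded_iff.1 hb
  refine le_csSup ⟨C, ?_⟩ ⟨s, t, u, hσs, hst, htu, huτ, rfl⟩
  rintro _ ⟨s', t', u', hσs', hs't', ht'u', hu'τ, rfl⟩
  exact (min_le_left _ _).trans (hC (mem_image_of_mem f ⟨hσs', hs't'.trans (ht'u'.trans hu'τ)⟩)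
    (mem_image_of_mem f ⟨hσs'.trans hs't', ht'u'.trans hu'τ⟩))

theorem deltaMod_le (ha : 0 ≤ a)
    (h : ∀ s t u, σ ≤ s → s ≤ t → t ≤ u → u ≤ τ → tripleDelta f s t u ≤ a) :
    deltaMod f σ τ ≤ a :=
  Real.sSup_le (by rintro _ ⟨s, t, u, h₁, h₂, h₃, h₄, rfl⟩; exact h s t u h₁ h₂ h₃ h₄) ha

theorem deltaMod_le_two_mul_fernMod (hb : IsBounded (f '' Icc σ τ)) (hστ : σ < τ) :
    deltaMod f σ τ ≤ 2 * fernMod f σ τ := by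
  suffices h : ∀ θ ∈ Ioc σ τ, deltaMod f σ τ / 2 ≤ fernSplit f σ τ θ by
    linarith [le_fernMod f hστ h]
  intro θ ⟨hσθ, hθτ⟩
  have hl : ∀ s, σ ≤ s → s < θ → dist (f σ) (f s) ≤ fernSplit f σ τ θ := fun s h₁ h₂ =>
    (le_max_left _ _).trans (max_dist_le_fernSplit f hb h₁ h₂ hθτ le_rfl)
  have hr : ∀ u, θ ≤ u → u ≤ τ → dist (f u) (f τ) ≤ fernSplit f σ τ θ := fun u h₁ h₂ =>
    (le_max_right _ _).trans (max_dist_le_fernSplit f hb le_rfl hσθ h₁ h₂)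
  rw [div_le_iff₀ two_pos]
  refine deltaMod_le f (by linarith [fernSplit_nonneg f (σ := σ) (τ := τ) (θ := θ)])
    fun s t u hσs hst htu huτ => ?_
  rcases lt_or_ge t θ with htθ | hθt
  · calc tripleDelta f s t u ≤ dist (f s) (f t) := min_le_left _ _
      _ ≤ dist (f σ) (f s) + dist (f σ) (f t) := dist_triangle_left _ _ _
      _ ≤ fernSplit f σ τ θ * 2 := by
        linarith [hl s hσs (hst.trans_lt htθ), hl t (hσs.trans hst) htθ]
  · calc tripleDelta f s t u ≤ dist (f t) (f u) := min_le_right _ _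
      _ ≤ dist (f t) (f τ) + dist (f u) (f τ) := dist_triangle_right _ _ _
      _ ≤ fernSplit f σ τ θ * 2 := by
        linarith [hr t hθt (htu.trans huτ), hr u (hθt.trans htu) huτ]

theorem exists_split_dist_le_deltaMod (hb : IsBounded (f '' Icc σ τ)) (hστ : σ ≤ τ) :
    ∃ θ₀ ∈ Icc σ τ, (∀ s ∈ Ico σ θ₀, dist (f σ) (f s) ≤ 2 * deltaMod f σ τ) ∧
      ∀ u ∈ Ioc θ₀ τ, dist (f u) (f τ) ≤ deltaMod f σ τ := by
  set A := {t ∈ Icc σ τ | dist (f σ) (f t) ≤ deltaMod f σ τ}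
  have hσA : σ ∈ A := ⟨left_mem_Icc.2 hστ, by simpa using deltaMod_nonneg f⟩
  have hA : BddAbove A := ⟨τ, fun t ht => ht.1.2⟩
  refine ⟨sSup A, ⟨le_csSup hA hσA, csSup_le ⟨σ, hσA⟩ fun t ht => ht.1.2⟩, ?_, ?_⟩
  · rintro s ⟨hσs, hsθ⟩
    obtain ⟨t, ⟨⟨-, htτ⟩, ht⟩, hst⟩ := exists_lt_of_lt_csSup ⟨σ, hσA⟩ hsθ
    rcases min_le_iff.1 (tripleDelta_le_deltaMod f hb le_rfl hσs hst.le htτ) with h | h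
    · linarith [deltaMod_nonneg f (σ := σ) (τ := τ)]
    · linarith [dist_triangle_right (f σ) (f s) (f t)]
  · rintro u ⟨hθu, huτ⟩
    have hσu := (le_csSup hA hσA).trans hθu.le
    have hu : ¬ dist (f σ) (f u) ≤ deltaMod f σ τ := fun h =>
      (le_csSup hA ⟨⟨hσu, huτ⟩, h⟩).not_gt hθu
    exact (min_le_iff.1 (tripleDelta_le_deltaMod f hb le_rfl hσu huτ le_rfl)).resolve_left hu

theorem fernMod_le_two_mul_deltaMod (hb : IsBounded (f '' Icc σ τ))
    (hrc : ∀ t ∈ Ico σ τ, ContinuousWithinAt f (Ici t) t) (hστ : σ < τ) :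
    fernMod f σ τ ≤ 2 * deltaMod f σ τ := by
  have hΔ := deltaMod_nonneg f (σ := σ) (τ := τ)
  obtain ⟨θ₀, ⟨hσθ₀, hθ₀τ⟩, hl, hr⟩ := exists_split_dist_le_deltaMod f hb hστ.le
  obtain rfl | hσθ₀' := hσθ₀.eq_or_lt
  · refine le_of_forall_pos_le_add fun ε hε => ?_
    obtain ⟨θ, hσθ, hθ⟩ := mem_nhdsGE_iff_exists_Ico_subset.1
      ((hrc σ ⟨le_rfl, hστ⟩).eventually (Metric.closedBall_mem_nhds (f σ) hε))
    have hsplit : min θ τ ∈ Ioc σ τ := ⟨lt_min hσθ hστ, min_le_right _ _⟩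
    have hsmall : ∀ s ∈ Ico σ (min θ τ), dist (f σ) (f s) ≤ ε := fun s hs => by
      rw [dist_comm]
      exact hθ (Ico_subset_Ico_right (min_le_left _ _) hs)
    calc fernMod f σ τ ≤ fernSplit f σ τ (min θ τ) := fernMod_le_fernSplit f hsplit
      _ ≤ deltaMod f σ τ + ε := fernSplit_le f (by linarith)
          (fun s hs => by linarith [hsmall s hs])
          (fun u hu => by linarith [hr u ⟨hsplit.1.trans_le hu.1, hu.2⟩])
      _ ≤ 2 * deltaMod f σ τ + ε := by linarith
  · have hr' : ∀ u ∈ Icc θ₀ τ, dist (f u) (f τ) ≤ deltaMod f σ τ := by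
      rintro u ⟨hθu, huτ⟩
      obtain rfl | hθu := hθu.eq_or_lt
      · obtain rfl | hθτ := huτ.eq_or_lt
        · simpa using hΔ
        · have hlim : Tendsto (fun v => dist (f v) (f τ)) (𝓝[>] θ₀) (𝓝 (dist (f θ₀) (f τ))) :=
            ((hrc θ₀ ⟨hσθ₀, hθτ⟩).mono Ioi_subset_Ici_self).dist tendsto_const_nhds
          exact le_of_tendsto hlim (eventually_of_mem (Ioc_mem_nhdsGT hθτ) hr)
      · exact hr u ⟨hθu, huτ⟩
    calc fernMod f σ τ ≤ fernSplit f σ τ θ₀ := fernMod_le_fernSplit f ⟨hσθ₀', hθ₀τ⟩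
      _ ≤ 2 * deltaMod f σ τ := fernSplit_le f (by linarith) hl
          (fun u hu => by linarith [hr' u hu])

end

theorem stmt0 {E : Type*} [MetricSpace E] (f : ℝ → E) (hf : IsCadlagOn f)
    (σ τ : ℝ) (hσ : 0 ≤ σ) (hστ : σ < τ) (hτ : τ ≤ 1) :
    (1 / 2) * fernMod f σ τ ≤ deltaMod f σ τ ∧ deltaMod f σ τ ≤ 2 * fernMod f σ τ := by
  have hb : IsBounded (f '' Icc σ τ) :=
    hf.isBounded_image_Icc.subset (image_mono (Icc_subset_Icc hσ hτ))
  have hrc : ∀ t ∈ Ico σ τ, ContinuousWithinAt f (Ici t) t := fun t ht =>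
    hf.1 t ⟨hσ.trans ht.1, ht.2.trans_le hτ⟩
  exact ⟨by linarith [fernMod_le_two_mul_deltaMod f hb hrc hστ],
    deltaMod_le_two_mul_fernMod f hb hστ⟩
end
end

section
/- For any càdlàg function f : [0,1] → E and every triplet 0 ≤ σ < t < τ ≤ 1, N(f;(σ,τ)) ≤ N(f;(σ,t)) ∨ N(f;(t,τ)) + Δ(f;σ,t,τ), where Δ(f;σ,t,τ) = d(f(σ),f(t)) ∧ d(f(t),f(τ)). -/
open MeasureTheory Set Filter

noncomputable section

/-!
Pick `θ₁ ∈ (σ, t]` and `θ₂ ∈ (t, τ]` that almost realise `N(f;(σ,t))` and `N(f;(t,τ))`. For every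
`s ∈ [θ₁, θ₂)`, `f(s)` lies within `max(N(f;(σ,t)), N(f;(t,τ)))` of `f(t)`, so using `θ₂`
for `(σ,τ)` costs at most an extra `d(f(σ),f(t))` by the triangle inequality through `t`, and
using `θ₁` costs at most an extra `d(f(t),f(τ))`; take the better of the two. Càdlàg functions
are bounded on `[0,1]`, which makes all the suprema involved finite.
-/

open Bornology Metric Topology

section Boundedness

theorem isBounded_image_of_forall_nhdsWithin {X Y : Type*} [TopologicalSpace X] [Bornology Y]
    {s : Set X} (hs : IsCompact s) {f : X → Y}
    (hf : ∀ x ∈ s, ∃ t ∈ 𝓝[s] x, IsBounded (f '' t)) : IsBounded (f '' s) :=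
  hs.induction_on (p := fun t => IsBounded (f '' t)) (by simp)
    (fun _ _ hst ht => ht.subset (image_mono hst))
    (fun _ _ hs ht => by simpa only [image_union] using hs.union ht) hf

variable {E : Type*} [MetricSpace E] {f : ℝ → E}

theorem IsCadlagOn.exists_tendsto_left (hf : IsCadlagOn f) {x : ℝ} (hx : x ∈ Icc (0 : ℝ) 1) :
    ∃ l, Tendsto f (𝓝[Icc 0 1 ∩ Iio x] x) (𝓝 l) := by
  rcases hx.1.eq_or_lt with rfl | hx₀
  · have hempty : Icc (0 : ℝ) 1 ∩ Iio 0 = ∅ :=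
      eq_empty_of_forall_notMem fun y hy => hy.2.not_ge hy.1.1
    exact ⟨f 0, by simp only [hempty, nhdsWithin_empty, tendsto_bot]⟩
  · obtain ⟨l, hl⟩ := hf.2 x ⟨hx₀, hx.2⟩
    exact ⟨l, hl.mono_left (nhdsWithin_mono _ inter_subset_right)⟩

theorem IsCadlagOn.continuousWithinAt_right (hf : IsCadlagOn f) {x : ℝ}
    (hx : x ∈ Icc (0 : ℝ) 1) : ContinuousWithinAt f (Icc 0 1 ∩ Ici x) x := by
  rcases hx.2.lt_or_eq with hx₁ | rfl
  · exact (hf.1 x ⟨hx.1, hx₁⟩).mono inter_subset_right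
  · exact continuousWithinAt_singleton.mono fun y hy => le_antisymm hy.1.2 hy.2

theorem IsCadlagOn.isBounded_image (hf : IsCadlagOn f) : IsBounded (f '' Icc 0 1) := by
  refine isBounded_image_of_forall_nhdsWithin isCompact_Icc fun x hx => ?_
  obtain ⟨l, hl⟩ := hf.exists_tendsto_left hx
  obtain ⟨t₁, ht₁, hb₁⟩ := exists_isBounded_image_of_tendsto hl
  obtain ⟨t₂, ht₂, hb₂⟩ := exists_isBounded_image_of_tendsto (hf.continuousWithinAt_right hx)
  refine ⟨t₁ ∪ t₂, ?_, by simpa only [image_union] using hb₁.union hb₂⟩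
  rw [← inter_univ (Icc 0 1), ← Iio_union_Ici (a := x), inter_union_distrib_left,
    nhdsWithin_union]
  exact union_mem_sup ht₁ ht₂

end Boundedness

section FerniqueModulus

variable {E : Type*} [MetricSpace E] {f : ℝ → E}

def fernSet (f : ℝ → E) (σ τ θ : ℝ) : Set ℝ :=
  {y : ℝ | ∃ s u : ℝ, σ ≤ s ∧ s < θ ∧ θ ≤ u ∧ u ≤ τ ∧
    y = max (dist (f σ) (f s)) (dist (f u) (f τ))}

theorem fernMod_eq (f : ℝ → E) (σ τ : ℝ) :
    fernMod f σ τ = sInf {x | ∃ θ, σ < θ ∧ θ ≤ τ ∧ x = sSup (fernSet f σ τ θ)} :=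
  rfl

theorem sSup_fernSet_nonneg (σ τ θ : ℝ) : 0 ≤ sSup (fernSet f σ τ θ) :=
  Real.sSup_nonneg <| by
    rintro _ ⟨s, u, -, -, -, -, rfl⟩
    exact le_max_of_le_left dist_nonneg

theorem fernMod_le_sSup_fernSet {σ τ θ : ℝ} (hσθ : σ < θ) (hθτ : θ ≤ τ) :
    fernMod f σ τ ≤ sSup (fernSet f σ τ θ) := by
  rw [fernMod_eq]
  refine csInf_le ⟨0, ?_⟩ ⟨θ, hσθ, hθτ, rfl⟩
  rintro _ ⟨θ, -, -, rfl⟩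
  exact sSup_fernSet_nonneg σ τ θ

theorem exists_sSup_fernSet_lt {σ τ ε : ℝ} (hστ : σ < τ) (hε : 0 < ε) :
    ∃ θ, σ < θ ∧ θ ≤ τ ∧ sSup (fernSet f σ τ θ) < fernMod f σ τ + ε := by
  have hne : {x | ∃ θ, σ < θ ∧ θ ≤ τ ∧ x = sSup (fernSet f σ τ θ)}.Nonempty :=
    ⟨_, τ, hστ, le_rfl, rfl⟩
  obtain ⟨_, ⟨θ, hσθ, hθτ, rfl⟩, hlt⟩ := Real.lt_sInf_add_pos hne hε
  exact ⟨θ, hσθ, hθτ, hlt⟩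

theorem bddAbove_fernSet {σ τ : ℝ} (hf : IsBounded (f '' Icc σ τ)) (θ : ℝ) :
    BddAbove (fernSet f σ τ θ) := by
  refine ⟨diam (f '' Icc σ τ), ?_⟩
  rintro _ ⟨s, u, hσs, hsθ, hθu, huτ, rfl⟩
  have hdist : ∀ a ∈ Icc σ τ, ∀ b ∈ Icc σ τ, dist (f a) (f b) ≤ diam (f '' Icc σ τ) :=
    fun a ha b hb => dist_le_diam_of_mem hf (mem_image_of_mem f ha) (mem_image_of_mem f hb)
  exact max_le (hdist σ ⟨le_rfl, by linarith⟩ s ⟨hσs, by linarith⟩)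
    (hdist u ⟨by linarith, huτ⟩ τ ⟨by linarith, le_rfl⟩)

theorem dist_left_le_sSup_fernSet {σ τ θ s : ℝ} (hB : BddAbove (fernSet f σ τ θ))
    (hθτ : θ ≤ τ) (hσs : σ ≤ s) (hsθ : s < θ) : dist (f σ) (f s) ≤ sSup (fernSet f σ τ θ) :=
  (le_max_left _ _).trans (le_csSup hB ⟨s, τ, hσs, hsθ, hθτ, le_rfl, rfl⟩)

theorem dist_right_le_sSup_fernSet {σ τ θ u : ℝ} (hB : BddAbove (fernSet f σ τ θ))
    (hσθ : σ < θ) (hθu : θ ≤ u) (huτ : u ≤ τ) : dist (f u) (f τ) ≤ sSup (fernSet f σ τ θ) :=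
  (le_max_right _ _).trans (le_csSup hB ⟨σ, u, le_rfl, hσθ, hθu, huτ, rfl⟩)

section Splitting

variable {σ t τ θ₁ θ₂ : ℝ} (hB₁ : BddAbove (fernSet f σ t θ₁))
  (hB₂ : BddAbove (fernSet f t τ θ₂)) (hσθ₁ : σ < θ₁) (hθ₁t : θ₁ ≤ t) (htθ₂ : t < θ₂)
  (hθ₂τ : θ₂ ≤ τ)
include hB₁ hB₂ hσθ₁ hθ₂τ

theorem dist_le_max_sSup_fernSet {s : ℝ} (hθ₁s : θ₁ ≤ s) (hsθ₂ : s < θ₂) :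
    dist (f s) (f t) ≤ max (sSup (fernSet f σ t θ₁)) (sSup (fernSet f t τ θ₂)) := by
  rcases le_total s t with hst | hts
  · exact (dist_right_le_sSup_fernSet hB₁ hσθ₁ hθ₁s hst).trans (le_max_left _ _)
  · rw [dist_comm]
    exact (dist_left_le_sSup_fernSet hB₂ hθ₂τ hts hsθ₂).trans (le_max_right _ _)

include hθ₁t htθ₂

theorem sSup_fernSet_le_of_right :
    sSup (fernSet f σ τ θ₂) ≤
      max (sSup (fernSet f σ t θ₁)) (sSup (fernSet f t τ θ₂)) + dist (f σ) (f t) := by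
  set M := max (sSup (fernSet f σ t θ₁)) (sSup (fernSet f t τ θ₂))
  have hM : M ≤ M + dist (f σ) (f t) := le_add_of_nonneg_right dist_nonneg
  refine Real.sSup_le ?_ ((le_max_of_le_left (sSup_fernSet_nonneg σ t θ₁)).trans hM)
  rintro _ ⟨s, u, hσs, hsθ₂, hθ₂u, huτ, rfl⟩
  refine max_le ?_ ?_
  · rcases lt_or_ge s θ₁ with hsθ₁ | hθ₁s
    · exact ((dist_left_le_sSup_fernSet hB₁ hθ₁t hσs hsθ₁).trans (le_max_left _ _)).trans hM
    · calc dist (f σ) (f s) ≤ dist (f s) (f t) + dist (f σ) (f t) := by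
            rw [add_comm]; exact dist_triangle_right _ _ _
        _ ≤ M + dist (f σ) (f t) := by
            gcongr; exact dist_le_max_sSup_fernSet hB₁ hB₂ hσθ₁ hθ₂τ hθ₁s hsθ₂
  · exact ((dist_right_le_sSup_fernSet hB₂ htθ₂ hθ₂u huτ).trans (le_max_right _ _)).trans hM

theorem sSup_fernSet_le_of_left :
    sSup (fernSet f σ τ θ₁) ≤
      max (sSup (fernSet f σ t θ₁)) (sSup (fernSet f t τ θ₂)) + dist (f t) (f τ) := by
  set M := max (sSup (fernSet f σ t θ₁)) (sSup (fernSet f t τ θ₂))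
  have hM : M ≤ M + dist (f t) (f τ) := le_add_of_nonneg_right dist_nonneg
  refine Real.sSup_le ?_ ((le_max_of_le_left (sSup_fernSet_nonneg σ t θ₁)).trans hM)
  rintro _ ⟨s, u, hσs, hsθ₁, hθ₁u, huτ, rfl⟩
  refine max_le ?_ ?_
  · exact ((dist_left_le_sSup_fernSet hB₁ hθ₁t hσs hsθ₁).trans (le_max_left _ _)).trans hM
  · rcases lt_or_ge u θ₂ with huθ₂ | hθ₂u
    · calc dist (f u) (f τ) ≤ dist (f u) (f t) + dist (f t) (f τ) := dist_triangle _ _ _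
        _ ≤ M + dist (f t) (f τ) := by
            gcongr; exact dist_le_max_sSup_fernSet hB₁ hB₂ hσθ₁ hθ₂τ hθ₁u huθ₂
    · exact ((dist_right_le_sSup_fernSet hB₂ htθ₂ hθ₂u huτ).trans (le_max_right _ _)).trans hM

theorem fernMod_le_max_sSup_fernSet_add_tripleDelta :
    fernMod f σ τ ≤
      max (sSup (fernSet f σ t θ₁)) (sSup (fernSet f t τ θ₂)) + tripleDelta f σ t τ := by
  rw [tripleDelta, ← min_add_add_left]
  exact le_min
    ((fernMod_le_sSup_fernSet ((hσθ₁.trans_le hθ₁t).trans htθ₂) hθ₂τ).trans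
      (sSup_fernSet_le_of_right hB₁ hB₂ hσθ₁ hθ₁t htθ₂ hθ₂τ))
    ((fernMod_le_sSup_fernSet hσθ₁ ((hθ₁t.trans htθ₂.le).trans hθ₂τ)).trans
      (sSup_fernSet_le_of_left hB₁ hB₂ hσθ₁ hθ₁t htθ₂ hθ₂τ))

end Splitting

end FerniqueModulus

theorem stmt2 {E : Type*} [MetricSpace E] (f : ℝ → E) (hf : IsCadlagOn f)
    (σ t τ : ℝ) (hσ : 0 ≤ σ) (hσt : σ < t) (htτ : t < τ) (hτ : τ ≤ 1) :
    fernMod f σ τ ≤ max (fernMod f σ t) (fernMod f t τ) + tripleDelta f σ t τ := by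
  have hbdd : ∀ a b, σ ≤ a → b ≤ τ → ∀ θ, BddAbove (fernSet f a b θ) := fun a b ha hb =>
    bddAbove_fernSet <| hf.isBounded_image.subset <|
      image_mono (Icc_subset_Icc (hσ.trans ha) (hb.trans hτ))
  refine le_of_forall_pos_le_add fun ε hε => ?_
  obtain ⟨θ₁, hσθ₁, hθ₁t, h₁⟩ := exists_sSup_fernSet_lt (f := f) hσt hε
  obtain ⟨θ₂, htθ₂, hθ₂τ, h₂⟩ := exists_sSup_fernSet_lt (f := f) htτ hε
  calc fernMod f σ τ
      ≤ max (sSup (fernSet f σ t θ₁)) (sSup (fernSet f t τ θ₂)) + tripleDelta f σ t τ :=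
        fernMod_le_max_sSup_fernSet_add_tripleDelta (hbdd σ t le_rfl htτ.le θ₁)
          (hbdd t τ hσt.le le_rfl θ₂) hσθ₁ hθ₁t htθ₂ hθ₂τ
    _ ≤ max (fernMod f σ t + ε) (fernMod f t τ + ε) + tripleDelta f σ t τ := by gcongr
    _ = max (fernMod f σ t) (fernMod f t τ) + tripleDelta f σ t τ + ε := by
        rw [max_add_add_right]; ring
end
end

section
/- Let X : [0,1]×Ω → ℝ^k be measurable with, for some C₀ > 0, p > 1, r > 0: E[(|X_t−X_s| ∧ |X_t−X_u|)^p] ≤ C₀(u−s)^{1+r} for all 0 ≤ s < t < u ≤ 1, E[|X_1−X_t|^p] ≤ C₀(1−t)^r, and E[|X_0−X_t|^p] ≤ C₀ t^r. If almost surely X ∈ D^μ([0,1],ℝ^k) for some μ ∈ (0,1) with μ < r/p, then E[ sup_{0≤t≤1} |X_t|^p ] ≤ N·( C₀ + E∫₀¹ |X_t|^p dt ) for a constant N = N(μ,r,p). -/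
open MeasureTheory Set Filter

noncomputable section

/-!
Chaining along dyadic points. If `f` is right-continuous on `[0,1)`, halving the dyadic interval
`[j 2⁻ⁿ, (j+1) 2⁻ⁿ)` that contains `t` costs at most one dyadic oscillation
`Δ(f; j 2⁻ⁿ, (2j+1) 2⁻ⁿ⁻¹, (j+1) 2⁻ⁿ)`, and the remainder `Δ(f; j 2⁻ⁿ, t, (j+1) 2⁻ⁿ)` tends to `0`
by right-continuity at `t`. Hence `|f t| ≤ |f 0| + |f 1 - f 0| + ∑ₘ oscₘ`, where `oscₘ` is the
largest oscillation of level `m`. Bounding a maximum by a sum, `E oscₘᵖ ≤ 2ᵐ C₀ 2^{-m(1+r)}`, so by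
Minkowski's inequality the series has `Lᵖ` norm at most `C₀^{1/p} / (1 - 2^{-r/p})`. Finally
`|X 0| ≤ |X t| + |X t - X 0|`, and Minkowski's inequality on `Ω × (0,1]` bounds `‖X 0‖ₚ` by
`(E ∫₀¹ |X t|ᵖ dt)^{1/p} + C₀^{1/p}`.
-/

open scoped ENNReal Topology

section Dyadic

variable {E : Type*} [MetricSpace E]

lemma tripleDelta_nonneg (f : ℝ → E) (s t u : ℝ) : 0 ≤ tripleDelta f s t u :=
  le_min dist_nonneg dist_nonneg

lemma tripleDelta_le_dist_add (f : ℝ → E) (a t h b : ℝ) :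
    tripleDelta f a t b ≤ dist (f t) (f h) + tripleDelta f a h b := by
  rw [tripleDelta, tripleDelta, ← min_add_add_left]
  refine min_le_min ?_ (dist_triangle _ _ _)
  linarith [dist_triangle (f a) (f h) (f t), dist_comm (f h) (f t)]

lemma tripleDelta_le_tripleDelta_left_add (f : ℝ → E) (a t h b : ℝ) :
    tripleDelta f a t b ≤ tripleDelta f a t h + tripleDelta f a h b := by
  rcases min_choice (dist (f a) (f t)) (dist (f t) (f h)) with hmin | hmin <;>
    rw [show tripleDelta f a t h = _ from hmin]
  · exact le_add_of_le_of_nonneg (min_le_left _ _) (tripleDelta_nonneg f a h b)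
  · exact tripleDelta_le_dist_add f a t h b

lemma tripleDelta_le_tripleDelta_right_add (f : ℝ → E) (a t h b : ℝ) :
    tripleDelta f a t b ≤ tripleDelta f h t b + tripleDelta f a h b := by
  rcases min_choice (dist (f h) (f t)) (dist (f t) (f b)) with hmin | hmin <;>
    rw [show tripleDelta f h t b = _ from hmin]
  · rw [dist_comm]
    exact tripleDelta_le_dist_add f a t h b
  · exact le_add_of_le_of_nonneg (min_le_right _ _) (tripleDelta_nonneg f a h b)

lemma dist_le_tripleDelta_add_dist (f : ℝ → E) (s t u : ℝ) :
    dist (f s) (f t) ≤ tripleDelta f s t u + dist (f s) (f u) := by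
  rcases min_choice (dist (f s) (f t)) (dist (f t) (f u)) with hmin | hmin <;>
    rw [tripleDelta, hmin]
  · linarith [dist_nonneg (x := f s) (y := f u)]
  · linarith [dist_triangle (f s) (f u) (f t), dist_comm (f u) (f t)]

def dyadicDelta (f : ℝ → E) (m j : ℕ) : ℝ :=
  tripleDelta f (j / 2 ^ m) ((2 * j + 1) / 2 ^ (m + 1)) ((j + 1) / 2 ^ m)

def dyadicOsc (f : ℝ → E) (m : ℕ) : ℝ≥0∞ :=
  (Finset.range (2 ^ m)).sup fun j => ENNReal.ofReal (dyadicDelta f m j)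

lemma exists_dyadic_chain (f : ℝ → E) {t : ℝ} (ht0 : 0 ≤ t) (ht1 : t < 1) (n : ℕ) :
    ∃ j : ℕ, j < 2 ^ n ∧ (j : ℝ) / 2 ^ n ≤ t ∧ t < (j + 1) / 2 ^ n ∧
      ENNReal.ofReal (tripleDelta f 0 t 1) ≤ ∑ m ∈ Finset.range n, dyadicOsc f m
        + ENNReal.ofReal (tripleDelta f (j / 2 ^ n) t ((j + 1) / 2 ^ n)) := by
  induction n with
  | zero => exact ⟨0, by simp, by simpa using ht0, by simpa using ht1, by simp⟩
  | succ n ih =>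
    obtain ⟨j, hj, hjt, htj, hchain⟩ := ih
    have hosc : ENNReal.ofReal (dyadicDelta f n j) ≤ dyadicOsc f n :=
      Finset.le_sup (f := fun j => ENNReal.ofReal (dyadicDelta f n j)) (Finset.mem_range.2 hj)
    have hpow : (2 : ℝ) ^ (n + 1) = 2 * 2 ^ n := pow_succ' 2 n
    have hleft : (j : ℝ) / 2 ^ n = 2 * j / 2 ^ (n + 1) := by
      rw [hpow]; field_simp
    have hright : ((j : ℝ) + 1) / 2 ^ n = (2 * j + 1 + 1) / 2 ^ (n + 1) := by
      rw [hpow]; field_simp; ring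
    rw [Finset.sum_range_succ]
    by_cases hmid : t < (2 * j + 1) / 2 ^ (n + 1)
    · refine ⟨2 * j, by omega, by push_cast; rwa [← hleft], by push_cast; exact hmid, ?_⟩
      push_cast
      rw [← hleft]
      refine hchain.trans ?_
      rw [add_assoc]
      gcongr
      refine (ENNReal.ofReal_le_ofReal
        (tripleDelta_le_tripleDelta_left_add f _ t ((2 * j + 1) / 2 ^ (n + 1)) _)).trans ?_
      rw [ENNReal.ofReal_add (tripleDelta_nonneg ..) (tripleDelta_nonneg ..), add_comm]
      exact add_le_add_left hosc _
    · refine ⟨2 * j + 1, by omega, by push_cast; linarith, by push_cast; rwa [← hright], ?_⟩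
      push_cast
      rw [← hright]
      refine hchain.trans ?_
      rw [add_assoc]
      gcongr
      refine (ENNReal.ofReal_le_ofReal
        (tripleDelta_le_tripleDelta_right_add f _ t ((2 * j + 1) / 2 ^ (n + 1)) _)).trans ?_
      rw [ENNReal.ofReal_add (tripleDelta_nonneg ..) (tripleDelta_nonneg ..), add_comm]
      exact add_le_add_left hosc _

lemma ofReal_tripleDelta_le_tsum_dyadicOsc {f : ℝ → E}
    (hf : ∀ t ∈ Ico (0 : ℝ) 1, ContinuousWithinAt f (Ici t) t) {t : ℝ} (ht : t ∈ Icc (0 : ℝ) 1) :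
    ENNReal.ofReal (tripleDelta f 0 t 1) ≤ ∑' m, dyadicOsc f m := by
  rcases ht.2.lt_or_eq with ht1 | rfl
  swap
  · simp [tripleDelta]
  choose j _ hjt htj hchain using exists_dyadic_chain f ht.1 ht1
  have hb : Tendsto (fun n => ((j n : ℝ) + 1) / 2 ^ n) atTop (𝓝[≥] t) := by
    have hlim : Tendsto (fun n : ℕ => t + (1 / 2 : ℝ) ^ n) atTop (𝓝 t) := by
      simpa using tendsto_const_nhds.add
        (tendsto_pow_atTop_nhds_zero_of_lt_one (by norm_num : (0 : ℝ) ≤ 1 / 2) (by norm_num))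
    refine tendsto_nhdsWithin_of_tendsto_nhds_of_eventually_within _
      (tendsto_of_tendsto_of_tendsto_of_le_of_le tendsto_const_nhds hlim
        (fun n => (htj n).le) fun n => ?_) (Eventually.of_forall fun n => (htj n).le)
    have := hjt n
    rw [add_div, one_div_pow]
    simpa [div_eq_mul_inv] using this
  have hdist : Tendsto (fun n => ENNReal.ofReal (dist (f t) (f ((j n + 1) / 2 ^ n))))
      atTop (𝓝 0) := by
    rw [← ENNReal.ofReal_zero]
    refine ENNReal.tendsto_ofReal ?_
    simpa [dist_comm] using
      (tendsto_iff_dist_tendsto_zero.1 ((hf t ⟨ht.1, ht1⟩).tendsto.comp hb))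
  refine ge_of_tendsto' (by simpa using tendsto_const_nhds.add hdist) fun n => (hchain n).trans ?_
  gcongr
  · exact ENNReal.sum_le_tsum _
  · exact min_le_right _ _

end Dyadic

lemma ofReal_norm_le_add_tsum_dyadicOsc {F : Type*} [NormedAddCommGroup F] {f : ℝ → F}
    (hf : ∀ t ∈ Ico (0 : ℝ) 1, ContinuousWithinAt f (Ici t) t) {t : ℝ} (ht : t ∈ Icc (0 : ℝ) 1) :
    ENNReal.ofReal ‖f t‖ ≤ ENNReal.ofReal ‖f 0‖ + ENNReal.ofReal (dist (f 0) (f 1))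
      + ∑' m, dyadicOsc f m := by
  have hnorm : ‖f t‖ ≤ ‖f 0‖ + dist (f 0) (f 1) + tripleDelta f 0 t 1 := by
    linarith [norm_le_norm_add_norm_sub' (f t) (f 0), dist_eq_norm' (f 0) (f t),
      dist_le_tripleDelta_add_dist f 0 t 1]
  refine (ENNReal.ofReal_le_ofReal hnorm).trans ?_
  rw [ENNReal.ofReal_add (by positivity) (tripleDelta_nonneg ..),
    ENNReal.ofReal_add (norm_nonneg _) dist_nonneg]
  gcongr
  exact ofReal_tripleDelta_le_tsum_dyadicOsc hf ht

section SupNorm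

variable {k : ℕ} {f : ℝ → EuclideanSpace ℝ (Fin k)}

lemma supNorm_nonneg (f : ℝ → EuclideanSpace ℝ (Fin k)) : 0 ≤ supNorm f :=
  Real.sSup_nonneg (by rintro x ⟨t, -, -, rfl⟩; exact norm_nonneg _)

lemma ofReal_supNorm_le {B : ℝ≥0∞} (h : ∀ t ∈ Icc (0 : ℝ) 1, ENNReal.ofReal ‖f t‖ ≤ B) :
    ENNReal.ofReal (supNorm f) ≤ B := by
  rcases eq_or_ne B ⊤ with rfl | hB
  · exact le_top
  rw [ENNReal.ofReal_le_iff_le_toReal hB]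
  refine Real.sSup_le ?_ ENNReal.toReal_nonneg
  rintro x ⟨t, ht0, ht1, rfl⟩
  exact (ENNReal.ofReal_le_iff_le_toReal hB).1 (h t ⟨ht0, ht1⟩)

lemma norm_le_supNorm {μ : ℝ} (hf : BddAbove (holderSet μ f)) {t : ℝ} (ht : t ∈ Icc (0 : ℝ) 1) :
    ‖f t‖ ≤ supNorm f := by
  obtain ⟨M, hM⟩ := hf
  have hbdd : BddAbove {x : ℝ | ∃ t : ℝ, 0 ≤ t ∧ t ≤ 1 ∧ x = ‖f t‖} := by
    refine ⟨‖f 0‖ + dist (f 0) (f 1) + M, ?_⟩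
    rintro x ⟨s, hs0, hs1, rfl⟩
    have hΔ : tripleDelta f 0 s 1 ≤ M :=
      hM ⟨0, s, 1, le_rfl, hs0, hs1, le_rfl, by simp⟩
    linarith [norm_le_norm_add_norm_sub' (f s) (f 0), dist_eq_norm' (f 0) (f s),
      dist_le_tripleDelta_add_dist f 0 s 1]
  exact le_csSup hbdd ⟨t, ht.1, ht.2, rfl⟩

end SupNorm

lemma eLpNorm'_tsum_le {α : Type*} [MeasurableSpace α] {P : Measure α} {f : ℕ → α → ℝ≥0∞}
    (hf : ∀ n, AEMeasurable (f n) P) {q : ℝ} (hq : 1 ≤ q) :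
    eLpNorm' (fun a => ∑' n, f n a) q P ≤ ∑' n, eLpNorm' (f n) q P := by
  have hq0 : 0 < q := zero_lt_one.trans_le hq
  have hpartial : ∀ n, eLpNorm' (∑ m ∈ Finset.range n, f m) q P ≤ ∑' m, eLpNorm' (f m) q P :=
    fun n => (eLpNorm'_sum_le (fun m _ => (hf m).aestronglyMeasurable) hq).trans
      (ENNReal.sum_le_tsum _)
  have hsup : ∀ a, (∑' n, f n a) ^ q = ⨆ n, (∑ m ∈ Finset.range n, f m a) ^ q := fun a => by
    rw [ENNReal.tsum_eq_iSup_nat]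
    exact (ENNReal.orderIsoRpow q hq0).map_iSup _
  simp only [eLpNorm', enorm_eq_self, Finset.sum_apply, one_div,
    ENNReal.rpow_inv_le_iff hq0] at hpartial ⊢
  simp_rw [hsup]
  rw [lintegral_iSup' (fun n => (Finset.aemeasurable_fun_sum _ fun m _ => hf m).pow_const q)
    (Eventually.of_forall fun a n n' hnn' => ENNReal.rpow_le_rpow
      (Finset.sum_le_sum_of_subset (Finset.range_subset_range.2 hnn')) hq0.le)]
  exact iSup_le hpartial

section Moments

variable {Ω : Type*} [MeasurableSpace Ω] {P : Measure Ω} {E : Type*} [MetricSpace E]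
  {X : ℝ → Ω → E} {p r C : ℝ}

lemma lintegral_dyadicOsc_rpow_le
    (hmeas : ∀ s t u, Measurable fun ω => tripleDelta (fun v => X v ω) s t u)
    (hΔ : ∀ s t u, 0 ≤ s → s < t → t < u → u ≤ 1 →
      ∫⁻ ω, ENNReal.ofReal (tripleDelta (fun v => X v ω) s t u) ^ p ∂P
        ≤ ENNReal.ofReal (C * (u - s) ^ (1 + r))) (m : ℕ) :
    ∫⁻ ω, dyadicOsc (fun v => X v ω) m ^ p ∂P ≤ ENNReal.ofReal (C * 2 ^ (-(r * m))) := by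
  have hpoint : ∀ ω, dyadicOsc (fun v => X v ω) m ^ p
      ≤ ∑ j ∈ Finset.range (2 ^ m), ENNReal.ofReal (dyadicDelta (fun v => X v ω) m j) ^ p := by
    intro ω
    obtain ⟨j, hj, hsup⟩ := Finset.exists_mem_eq_sup _
      (Finset.nonempty_range_iff.2 (pow_pos two_pos m).ne')
      fun j => ENNReal.ofReal (dyadicDelta (fun v => X v ω) m j)
    rw [dyadicOsc, hsup]
    exact Finset.single_le_sum
      (f := fun j => ENNReal.ofReal (dyadicDelta (fun v => X v ω) m j) ^ p)
      (fun _ _ => bot_le) hj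
  have hterm : ∀ j ∈ Finset.range (2 ^ m),
      ∫⁻ ω, ENNReal.ofReal (dyadicDelta (fun v => X v ω) m j) ^ p ∂P
        ≤ ENNReal.ofReal (C * ((2 : ℝ) ^ m)⁻¹ ^ (1 + r)) := by
    intro j hj
    have hj' : (j : ℝ) + 1 ≤ 2 ^ m := by exact_mod_cast Finset.mem_range.1 hj
    have hpow : (2 : ℝ) ^ (m + 1) = 2 * 2 ^ m := pow_succ' 2 m
    have hsub : ((j : ℝ) + 1) / 2 ^ m - j / 2 ^ m = ((2 : ℝ) ^ m)⁻¹ := by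
      field_simp
      ring
    have hb := hΔ (j / 2 ^ m) ((2 * j + 1) / 2 ^ (m + 1)) ((j + 1) / 2 ^ m) (by positivity)
      (by rw [hpow, div_lt_div_iff₀ (by positivity) (by positivity)]; nlinarith)
      (by rw [hpow, div_lt_div_iff₀ (by positivity) (by positivity)]; nlinarith)
      ((div_le_one (by positivity)).2 hj')
    rwa [hsub] at hb
  calc ∫⁻ ω, dyadicOsc (fun v => X v ω) m ^ p ∂P
      ≤ ∫⁻ ω, ∑ j ∈ Finset.range (2 ^ m),
          ENNReal.ofReal (dyadicDelta (fun v => X v ω) m j) ^ p ∂P := lintegral_mono hpoint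
    _ = ∑ j ∈ Finset.range (2 ^ m),
          ∫⁻ ω, ENNReal.ofReal (dyadicDelta (fun v => X v ω) m j) ^ p ∂P :=
        lintegral_finsetSum _ fun j _ => (hmeas _ _ _).ennreal_ofReal.pow_const p
    _ ≤ ∑ j ∈ Finset.range (2 ^ m), ENNReal.ofReal (C * ((2 : ℝ) ^ m)⁻¹ ^ (1 + r)) :=
        Finset.sum_le_sum hterm
    _ = ENNReal.ofReal (C * 2 ^ (-(r * m))) := by
        rw [Finset.sum_const, Finset.card_range, nsmul_eq_mul, ← ENNReal.ofReal_natCast,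
          ← ENNReal.ofReal_mul (by positivity)]
        congr 1
        have h2 : (0 : ℝ) < 2 := two_pos
        push_cast
        rw [← Real.rpow_natCast, ← Real.rpow_neg h2.le, ← Real.rpow_mul h2.le, mul_left_comm,
          ← Real.rpow_add h2]
        ring_nf

lemma measurable_dyadicOsc (hmeas : ∀ s t u, Measurable fun ω => tripleDelta (fun v => X v ω) s t u)
    (m : ℕ) : Measurable fun ω => dyadicOsc (fun v => X v ω) m := by
  have hsup : (fun ω => dyadicOsc (fun v => X v ω) m) = (Finset.range (2 ^ m)).sup
      fun j ω => ENNReal.ofReal (dyadicDelta (fun v => X v ω) m j) := by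
    ext ω
    simp only [dyadicOsc, Finset.sup_apply]
  rw [hsup]
  exact Finset.sup_induction measurable_const (fun _ ha _ hb => ha.sup hb)
    fun j _ => (hmeas _ _ _).ennreal_ofReal

lemma eLpNorm'_tsum_dyadicOsc_le (hp : 1 ≤ p) (hr : 0 < r) (hC : 0 ≤ C)
    (hmeas : ∀ s t u, Measurable fun ω => tripleDelta (fun v => X v ω) s t u)
    (hΔ : ∀ s t u, 0 ≤ s → s < t → t < u → u ≤ 1 →
      ∫⁻ ω, ENNReal.ofReal (tripleDelta (fun v => X v ω) s t u) ^ p ∂P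
        ≤ ENNReal.ofReal (C * (u - s) ^ (1 + r))) :
    eLpNorm' (fun ω => ∑' m, dyadicOsc (fun v => X v ω) m) p P
      ≤ ENNReal.ofReal (C ^ (1 / p) * (1 - 2 ^ (-(r / p)))⁻¹) := by
  have hp0 : 0 < p := zero_lt_one.trans_le hp
  have hρ : (2 : ℝ) ^ (-(r / p)) < 1 :=
    Real.rpow_lt_one_of_one_lt_of_neg one_lt_two (neg_neg_of_pos (div_pos hr hp0))
  have hterm : ∀ m, eLpNorm' (fun ω => dyadicOsc (fun v => X v ω) m) p P
      ≤ ENNReal.ofReal (C ^ (1 / p)) * ENNReal.ofReal (2 ^ (-(r / p))) ^ m := by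
    intro m
    simp only [eLpNorm', enorm_eq_self]
    calc _ ≤ ENNReal.ofReal (C * 2 ^ (-(r * m))) ^ (1 / p) := by
          gcongr
          exact lintegral_dyadicOsc_rpow_le hmeas hΔ m
      _ = _ := by
        rw [ENNReal.ofReal_rpow_of_nonneg (by positivity) (by positivity),
          ← ENNReal.ofReal_pow (by positivity), ← ENNReal.ofReal_mul (by positivity)]
        congr 1
        rw [Real.mul_rpow hC (by positivity), ← Real.rpow_mul two_pos.le, ← Real.rpow_natCast,
          ← Real.rpow_mul two_pos.le]
        ring_nf
  calc _ ≤ ∑' m, eLpNorm' (fun ω => dyadicOsc (fun v => X v ω) m) p P :=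
        eLpNorm'_tsum_le (fun m => (measurable_dyadicOsc hmeas m).aemeasurable) hp
    _ ≤ ∑' m, ENNReal.ofReal (C ^ (1 / p)) * ENNReal.ofReal (2 ^ (-(r / p))) ^ m :=
        ENNReal.tsum_le_tsum hterm
    _ = _ := by
        rw [ENNReal.tsum_mul_left, ENNReal.tsum_geometric, ← ENNReal.ofReal_one,
          ← ENNReal.ofReal_sub _ (by positivity), ← ENNReal.ofReal_inv_of_pos (by linarith),
          ← ENNReal.ofReal_mul (by positivity)]

end Moments

instance isProbabilityMeasure_restrict_Ioc_zero_one :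
    IsProbabilityMeasure (volume.restrict (Ioc (0 : ℝ) 1)) :=
  ⟨by simp⟩

section Initial

variable {Ω : Type*} [MeasurableSpace Ω] {P : Measure Ω} [IsProbabilityMeasure P]
  {F : Type*} [NormedAddCommGroup F] [MeasurableSpace F] [BorelSpace F]
  [SecondCountableTopology F] {X : ℝ → Ω → F}

lemma eLpNorm'_initial_le (hX : Measurable fun q : ℝ × Ω => X q.1 q.2) {p C : ℝ} (hp : 1 ≤ p)
    (hC : ∀ t ∈ Ioc (0 : ℝ) 1,
      ∫⁻ ω, ENNReal.ofReal (dist (X 0 ω) (X t ω)) ^ p ∂P ≤ ENNReal.ofReal C) :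
    eLpNorm' (fun ω => ENNReal.ofReal ‖X 0 ω‖) p P
      ≤ eLpNorm' (fun z : Ω × ℝ => ENNReal.ofReal ‖X z.2 z.1‖) p
          (P.prod (volume.restrict (Ioc 0 1))) + ENNReal.ofReal C ^ (1 / p) := by
  have hp0 : 0 < p := zero_lt_one.trans_le hp
  have hXz : Measurable fun z : Ω × ℝ => X z.2 z.1 := hX.comp measurable_swap
  have hX0 : Measurable fun ω => X 0 ω := hX.comp measurable_prodMk_left
  have hdistz : Measurable fun z : Ω × ℝ => dist (X 0 z.1) (X z.2 z.1) :=
    (hX0.comp measurable_fst).dist hXz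
  have hinit : eLpNorm' (fun ω => ENNReal.ofReal ‖X 0 ω‖) p P
      = eLpNorm' (fun z : Ω × ℝ => ENNReal.ofReal ‖X 0 z.1‖) p
          (P.prod (volume.restrict (Ioc 0 1))) := by
    simp only [eLpNorm', enorm_eq_self]
    rw [measurePreserving_fst.lintegral_comp (hX0.norm.ennreal_ofReal.pow_const p)]
  have hdist : eLpNorm' (fun z : Ω × ℝ => ENNReal.ofReal (dist (X 0 z.1) (X z.2 z.1))) p
      (P.prod (volume.restrict (Ioc 0 1))) ≤ ENNReal.ofReal C ^ (1 / p) := by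
    simp only [eLpNorm', enorm_eq_self]
    gcongr
    rw [lintegral_prod_symm _
      (hdistz.ennreal_ofReal.pow_const p).aemeasurable]
    calc _ ≤ ∫⁻ _, ENNReal.ofReal C ∂(volume.restrict (Ioc (0 : ℝ) 1)) :=
          lintegral_mono_ae ((ae_restrict_mem measurableSet_Ioc).mono hC)
      _ = ENNReal.ofReal C := by simp
  rw [hinit]
  calc _ ≤ eLpNorm' ((fun z : Ω × ℝ => ENNReal.ofReal ‖X z.2 z.1‖)
          + fun z => ENNReal.ofReal (dist (X 0 z.1) (X z.2 z.1))) p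
          (P.prod (volume.restrict (Ioc 0 1))) := by
        refine eLpNorm'_mono_enorm_ae hp0.le (Eventually.of_forall fun z => ?_)
        simp only [enorm_eq_self, Pi.add_apply]
        refine (ENNReal.ofReal_le_ofReal ?_).trans ENNReal.ofReal_add_le
        rw [dist_eq_norm]
        exact norm_le_norm_add_norm_sub' _ _
    _ ≤ _ := eLpNorm'_add_le hXz.norm.ennreal_ofReal.aestronglyMeasurable
          hdistz.ennreal_ofReal.aestronglyMeasurable hp
    _ ≤ _ := add_le_add le_rfl hdist

end Initial

lemma rpow_le_one_add_mul_add_of_le {a c y K : ℝ≥0∞} {p : ℝ} (hp : 0 < p)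
    (h : y ≤ a ^ (1 / p) + K * c ^ (1 / p)) : y ^ p ≤ (1 + K) ^ p * (c + a) := by
  have ha : a ^ (1 / p) ≤ (c + a) ^ (1 / p) := by gcongr; exact le_add_self
  have hc : c ^ (1 / p) ≤ (c + a) ^ (1 / p) := by gcongr; exact le_self_add
  calc y ^ p ≤ ((1 + K) * (c + a) ^ (1 / p)) ^ p := by
        gcongr
        calc y ≤ a ^ (1 / p) + K * c ^ (1 / p) := h
          _ ≤ (c + a) ^ (1 / p) + K * (c + a) ^ (1 / p) := by gcongr
          _ = (1 + K) * (c + a) ^ (1 / p) := by ring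
    _ = (1 + K) ^ p * (c + a) := by
        rw [ENNReal.mul_rpow_of_nonneg _ _ hp.le, ← ENNReal.rpow_mul, one_div_mul_cancel hp.ne',
          ENNReal.rpow_one]

section SupNormMoment

variable {Ω : Type*} [MeasurableSpace Ω] {P : Measure Ω} {k : ℕ}
  {X : ℝ → Ω → EuclideanSpace ℝ (Fin k)} {p r C : ℝ}

lemma eLpNorm'_supNorm_le_add (hX : Measurable fun q : ℝ × Ω => X q.1 q.2) (hp : 1 ≤ p)
    (hrcont : ∀ᵐ ω ∂P, ∀ t ∈ Ico (0 : ℝ) 1, ContinuousWithinAt (fun v => X v ω) (Ici t) t) :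
    eLpNorm' (fun ω => ENNReal.ofReal (supNorm fun v => X v ω)) p P
      ≤ eLpNorm' (fun ω => ENNReal.ofReal ‖X 0 ω‖) p P
        + eLpNorm' (fun ω => ENNReal.ofReal (dist (X 0 ω) (X 1 ω))) p P
        + eLpNorm' (fun ω => ∑' m, dyadicOsc (fun v => X v ω) m) p P := by
  have hXt : ∀ t, Measurable (X t) := fun t => hX.comp measurable_prodMk_left
  have hA := (hXt 0).norm.ennreal_ofReal
  have hB := ((hXt 0).dist (hXt 1)).ennreal_ofReal
  have hS : Measurable fun ω => ∑' m, dyadicOsc (fun v => X v ω) m :=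
    Measurable.tsum (measurable_dyadicOsc fun s t u =>
      ((hXt s).dist (hXt t)).min ((hXt t).dist (hXt u)))
  calc _ ≤ eLpNorm' ((fun ω => ENNReal.ofReal ‖X 0 ω‖)
          + (fun ω => ENNReal.ofReal (dist (X 0 ω) (X 1 ω)))
          + fun ω => ∑' m, dyadicOsc (fun v => X v ω) m) p P :=
        eLpNorm'_mono_enorm_ae (by linarith) (hrcont.mono fun ω hω => ofReal_supNorm_le
          fun t ht => ofReal_norm_le_add_tsum_dyadicOsc hω ht)
    _ ≤ _ := by
        refine (eLpNorm'_add_le (hA.add hB).aestronglyMeasurable hS.aestronglyMeasurable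
          hp).trans ?_
        gcongr
        exact eLpNorm'_add_le hA.aestronglyMeasurable hB.aestronglyMeasurable hp

lemma eLpNorm'_supNorm_le [IsProbabilityMeasure P] (hX : Measurable fun q : ℝ × Ω => X q.1 q.2)
    (hp : 1 ≤ p) (hr : 0 < r) (hC : 0 ≤ C)
    (hΔ : ∀ s t u, 0 ≤ s → s < t → t < u → u ≤ 1 →
      ∫⁻ ω, ENNReal.ofReal (tripleDelta (fun v => X v ω) s t u) ^ p ∂P
        ≤ ENNReal.ofReal (C * (u - s) ^ (1 + r)))
    (hends : ∫⁻ ω, ENNReal.ofReal (dist (X 0 ω) (X 1 ω)) ^ p ∂P ≤ ENNReal.ofReal C)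
    (hinit : ∀ t ∈ Ioc (0 : ℝ) 1,
      ∫⁻ ω, ENNReal.ofReal (dist (X 0 ω) (X t ω)) ^ p ∂P ≤ ENNReal.ofReal C)
    (hrcont : ∀ᵐ ω ∂P, ∀ t ∈ Ico (0 : ℝ) 1, ContinuousWithinAt (fun v => X v ω) (Ici t) t) :
    eLpNorm' (fun ω => ENNReal.ofReal (supNorm fun v => X v ω)) p P
      ≤ eLpNorm' (fun z : Ω × ℝ => ENNReal.ofReal ‖X z.2 z.1‖) p
          (P.prod (volume.restrict (Ioc 0 1)))
        + ENNReal.ofReal (2 + (1 - 2 ^ (-(r / p)))⁻¹) * ENNReal.ofReal C ^ (1 / p) := by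
  have hp0 : 0 < p := zero_lt_one.trans_le hp
  have hρ : (2 : ℝ) ^ (-(r / p)) < 1 :=
    Real.rpow_lt_one_of_one_lt_of_neg one_lt_two (neg_neg_of_pos (div_pos hr hp0))
  have hσ : 0 ≤ (1 - (2 : ℝ) ^ (-(r / p)))⁻¹ := inv_nonneg.2 (by linarith)
  have hXt : ∀ t, Measurable (X t) := fun t => hX.comp measurable_prodMk_left
  have hends' : eLpNorm' (fun ω => ENNReal.ofReal (dist (X 0 ω) (X 1 ω))) p P
      ≤ ENNReal.ofReal C ^ (1 / p) := by
    simp only [eLpNorm', enorm_eq_self]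
    gcongr
  calc _ ≤ (eLpNorm' (fun z : Ω × ℝ => ENNReal.ofReal ‖X z.2 z.1‖) p
            (P.prod (volume.restrict (Ioc 0 1))) + ENNReal.ofReal C ^ (1 / p))
          + ENNReal.ofReal C ^ (1 / p)
          + ENNReal.ofReal (C ^ (1 / p) * (1 - 2 ^ (-(r / p)))⁻¹) :=
        (eLpNorm'_supNorm_le_add hX hp hrcont).trans
          (add_le_add (add_le_add (eLpNorm'_initial_le hX hp hinit) hends')
            (eLpNorm'_tsum_dyadicOsc_le hp hr hC
              (fun s t u => ((hXt s).dist (hXt t)).min ((hXt t).dist (hXt u))) hΔ))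
    _ = _ := by
        rw [ENNReal.ofReal_rpow_of_nonneg hC (by positivity), ← ENNReal.ofReal_mul (by positivity),
          add_assoc, add_assoc, ← ENNReal.ofReal_add (by positivity) (by positivity),
          ← ENNReal.ofReal_add (by positivity) (by positivity)]
        ring_nf

theorem lintegral_supNorm_rpow_le [IsProbabilityMeasure P]
    (hX : Measurable fun q : ℝ × Ω => X q.1 q.2) (hp : 1 ≤ p) (hr : 0 < r) (hC : 0 ≤ C)
    (hΔ : ∀ s t u, 0 ≤ s → s < t → t < u → u ≤ 1 →
      ∫⁻ ω, ENNReal.ofReal (tripleDelta (fun v => X v ω) s t u) ^ p ∂P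
        ≤ ENNReal.ofReal (C * (u - s) ^ (1 + r)))
    (hends : ∫⁻ ω, ENNReal.ofReal (dist (X 0 ω) (X 1 ω)) ^ p ∂P ≤ ENNReal.ofReal C)
    (hinit : ∀ t ∈ Ioc (0 : ℝ) 1,
      ∫⁻ ω, ENNReal.ofReal (dist (X 0 ω) (X t ω)) ^ p ∂P ≤ ENNReal.ofReal C)
    (hrcont : ∀ᵐ ω ∂P, ∀ t ∈ Ico (0 : ℝ) 1, ContinuousWithinAt (fun v => X v ω) (Ici t) t) :
    ∫⁻ ω, ENNReal.ofReal (supNorm fun v => X v ω) ^ p ∂P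
      ≤ ENNReal.ofReal ((3 + (1 - 2 ^ (-(r / p)))⁻¹) ^ p)
        * (ENNReal.ofReal C
          + ∫⁻ z, ENNReal.ofReal ‖X z.2 z.1‖ ^ p ∂(P.prod (volume.restrict (Ioc 0 1)))) := by
  have hp0 : 0 < p := zero_lt_one.trans_le hp
  have hρ : (2 : ℝ) ^ (-(r / p)) < 1 :=
    Real.rpow_lt_one_of_one_lt_of_neg one_lt_two (neg_neg_of_pos (div_pos hr hp0))
  have hσ : 0 ≤ (1 - (2 : ℝ) ^ (-(r / p)))⁻¹ := inv_nonneg.2 (by linarith)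
  have h := eLpNorm'_supNorm_le hX hp hr hC hΔ hends hinit hrcont
  simp only [eLpNorm', enorm_eq_self] at h
  have h' := rpow_le_one_add_mul_add_of_le hp0 h
  rw [← ENNReal.rpow_mul, one_div_mul_cancel hp0.ne', ENNReal.rpow_one] at h'
  convert h' using 2
  rw [← ENNReal.ofReal_rpow_of_nonneg (by positivity) hp0.le, ← ENNReal.ofReal_one,
    ← ENNReal.ofReal_add zero_le_one (by positivity)]
  ring_nf

end SupNormMoment

section Conversion

variable {Ω : Type*} [MeasurableSpace Ω] {P : Measure Ω} {k : ℕ}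
  {X : ℝ → Ω → EuclideanSpace ℝ (Fin k)} {p r C : ℝ}

lemma lintegral_ofReal_rpow_le_of_le_dist (hp : 0 ≤ p)
    (hint : Integrable (fun ω => supNorm (fun v => X v ω) ^ p) P)
    (hsup : ∀ᵐ ω ∂P, ∀ t ∈ Icc (0 : ℝ) 1, ‖X t ω‖ ≤ supNorm fun v => X v ω)
    ⦃s t c : ℝ⦄ (hs : s ∈ Icc (0 : ℝ) 1) (ht : t ∈ Icc (0 : ℝ) 1) {g : Ω → ℝ} (hg : Measurable g)
    (hg0 : ∀ ω, 0 ≤ g ω) (hgd : ∀ ω, g ω ≤ dist (X s ω) (X t ω))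
    (hc : ∫ ω, g ω ^ p ∂P ≤ c) :
    ∫⁻ ω, ENNReal.ofReal (g ω) ^ p ∂P ≤ ENNReal.ofReal c := by
  have hgint : Integrable (fun ω => g ω ^ p) P := by
    refine (hint.const_mul (2 ^ p)).mono' (hg.pow_const p).aestronglyMeasurable
      (hsup.mono fun ω hω => ?_)
    have hg2 : g ω ≤ 2 * supNorm fun v => X v ω := by
      linarith [hgd ω, dist_le_norm_add_norm (X s ω) (X t ω), hω s hs, hω t ht]
    rw [Real.norm_of_nonneg (by have := hg0 ω; positivity),
      ← Real.mul_rpow zero_le_two (supNorm_nonneg _)]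
    exact Real.rpow_le_rpow (hg0 ω) hg2 hp
  calc ∫⁻ ω, ENNReal.ofReal (g ω) ^ p ∂P = ∫⁻ ω, ENNReal.ofReal (g ω ^ p) ∂P :=
        lintegral_congr fun ω => ENNReal.ofReal_rpow_of_nonneg (hg0 ω) hp
    _ = ENNReal.ofReal (∫ ω, g ω ^ p ∂P) :=
        (ofReal_integral_eq_lintegral_ofReal hgint
          (ae_of_all _ fun ω => by have := hg0 ω; positivity)).symm
    _ ≤ ENNReal.ofReal c := ENNReal.ofReal_le_ofReal hc

lemma ofReal_integral_intervalIntegral_eq_lintegral_prod [IsProbabilityMeasure P]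
    (hX : Measurable fun q : ℝ × Ω => X q.1 q.2) (hp : 0 ≤ p)
    (hint : Integrable (fun ω => supNorm (fun v => X v ω) ^ p) P)
    (hsup : ∀ᵐ ω ∂P, ∀ t ∈ Icc (0 : ℝ) 1, ‖X t ω‖ ≤ supNorm fun v => X v ω) :
    ENNReal.ofReal (∫ ω, (∫ t in (0 : ℝ)..1, ‖X t ω‖ ^ p) ∂P)
      = ∫⁻ z, ENNReal.ofReal ‖X z.2 z.1‖ ^ p ∂(P.prod (volume.restrict (Ioc 0 1))) := by
  have hgint : Integrable (fun z : Ω × ℝ => ‖X z.2 z.1‖ ^ p)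
      (P.prod (volume.restrict (Ioc 0 1))) := by
    refine (hint.comp_fst _).mono'
      ((hX.comp measurable_swap).norm.pow_const p).aestronglyMeasurable ?_
    filter_upwards [measurePreserving_fst.quasiMeasurePreserving.ae hsup,
      measurePreserving_snd.quasiMeasurePreserving.ae (ae_restrict_mem measurableSet_Ioc)]
      with z hz hz2
    rw [Real.norm_of_nonneg (by positivity)]
    exact Real.rpow_le_rpow (norm_nonneg _) (hz z.2 (Ioc_subset_Icc_self hz2)) hp
  simp_rw [intervalIntegral.integral_of_le zero_le_one]
  rw [← integral_prod _ hgint, ofReal_integral_eq_lintegral_ofReal hgint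
    (ae_of_all _ fun z => by positivity)]
  exact lintegral_congr fun z => (ENNReal.ofReal_rpow_of_nonneg (norm_nonneg _) hp).symm

theorem integral_supNorm_rpow_le_of_integrable [IsProbabilityMeasure P] {μ : ℝ}
    (hX : Measurable fun q : ℝ × Ω => X q.1 q.2) (hp : 1 ≤ p) (hr : 0 < r) (hC : 0 ≤ C)
    (hTriple : ∀ s t u, 0 ≤ s → s < t → t < u → u ≤ 1 →
      ∫ ω, tripleDelta (fun v => X v ω) s t u ^ p ∂P ≤ C * (u - s) ^ (1 + r))
    (hends : ∫ ω, dist (X 1 ω) (X 0 ω) ^ p ∂P ≤ C)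
    (hinit : ∀ t ∈ Ioc (0 : ℝ) 1, ∫ ω, dist (X 0 ω) (X t ω) ^ p ∂P ≤ C)
    (hpath : ∀ᵐ ω ∂P, MemDHolder μ fun v => X v ω)
    (hint : Integrable (fun ω => supNorm (fun v => X v ω) ^ p) P) :
    ∫ ω, supNorm (fun v => X v ω) ^ p ∂P
      ≤ (3 + (1 - 2 ^ (-(r / p)))⁻¹) ^ p * (C + ∫ ω, (∫ t in (0 : ℝ)..1, ‖X t ω‖ ^ p) ∂P) := by
  have hp0 : 0 ≤ p := zero_le_one.trans hp
  have hρ : (2 : ℝ) ^ (-(r / p)) < 1 :=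
    Real.rpow_lt_one_of_one_lt_of_neg one_lt_two (neg_neg_of_pos (div_pos hr (by linarith)))
  have hσ : 0 < (1 - (2 : ℝ) ^ (-(r / p)))⁻¹ := inv_pos.2 (by linarith)
  have hsup : ∀ᵐ ω ∂P, ∀ t ∈ Icc (0 : ℝ) 1, ‖X t ω‖ ≤ supNorm fun v => X v ω :=
    hpath.mono fun ω hω t ht => norm_le_supNorm hω.2.1 ht
  have hXt : ∀ t, Measurable (X t) := fun t => hX.comp measurable_prodMk_left
  have hmoment := lintegral_ofReal_rpow_le_of_le_dist hp0 hint hsup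
  have key := lintegral_supNorm_rpow_le hX hp hr hC
    (fun s t u hs hst htu hu => hmoment ⟨hs, by linarith⟩ ⟨by linarith, by linarith⟩
      (((hXt s).dist (hXt t)).min ((hXt t).dist (hXt u))) (fun _ => tripleDelta_nonneg ..)
      (fun _ => min_le_left _ _) (hTriple s t u hs hst htu hu))
    (hmoment ⟨zero_le_one, le_rfl⟩ ⟨le_rfl, zero_le_one⟩ ((hXt 0).dist (hXt 1))
      (fun _ => dist_nonneg) (fun _ => (dist_comm _ _).le) (by simpa [dist_comm] using hends))
    (fun t ht => hmoment ⟨le_rfl, zero_le_one⟩ ⟨ht.1.le, ht.2⟩ ((hXt 0).dist (hXt t))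
      (fun _ => dist_nonneg) (fun _ => le_rfl) (hinit t ht))
    (hpath.mono fun ω hω => hω.1.1)
  have hW : 0 ≤ ∫ ω, (∫ t in (0 : ℝ)..1, ‖X t ω‖ ^ p) ∂P :=
    integral_nonneg fun ω => intervalIntegral.integral_nonneg zero_le_one fun t _ => by positivity
  rw [integral_eq_lintegral_of_nonneg_ae
    (ae_of_all _ fun ω => Real.rpow_nonneg (supNorm_nonneg _) p) hint.1]
  refine ENNReal.toReal_le_of_le_ofReal (by positivity) ?_
  rw [ENNReal.ofReal_mul (by positivity), ENNReal.ofReal_add hC hW,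
    ofReal_integral_intervalIntegral_eq_lintegral_prod hX hp0 hint hsup]
  simpa only [ENNReal.ofReal_rpow_of_nonneg (supNorm_nonneg _) hp0] using key

end Conversion

theorem stmt13_general (k : ℕ) (p r μ : ℝ) (hp : 1 < p) (hr : 0 < r) :
    ∃ N : ℝ, 0 < N ∧
      ∀ {Ω : Type} [MeasureSpace Ω] [IsProbabilityMeasure (volume : Measure Ω)]
        (X : ℝ → Ω → EuclideanSpace ℝ (Fin k)),
        Measurable (fun q : ℝ × Ω => X q.1 q.2) →
        ∀ C₀ : ℝ, 0 < C₀ →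
        (∀ s t u : ℝ, 0 ≤ s → s < t → t < u → u ≤ 1 →
          (∫ ω, tripleDelta (fun v => X v ω) s t u ^ p) ≤ C₀ * (u - s) ^ (1 + r)) →
        (∀ t : ℝ, 0 ≤ t → t ≤ 1 →
          (∫ ω, dist (X 1 ω) (X t ω) ^ p) ≤ C₀ * (1 - t) ^ r) →
        (∀ t : ℝ, 0 ≤ t → t ≤ 1 →
          (∫ ω, dist (X 0 ω) (X t ω) ^ p) ≤ C₀ * t ^ r) →
        (∀ᵐ ω, MemDHolder μ (fun v => X v ω)) →
        (∫ ω, supNorm (fun v => X v ω) ^ p) ≤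
          N * (C₀ + ∫ ω, ∫ t in (0:ℝ)..1, ‖X t ω‖ ^ p) := by
  have hρ : (2 : ℝ) ^ (-(r / p)) < 1 :=
    Real.rpow_lt_one_of_one_lt_of_neg one_lt_two (neg_neg_of_pos (div_pos hr (by linarith)))
  have hσ : 0 < (1 - (2 : ℝ) ^ (-(r / p)))⁻¹ := inv_pos.2 (by linarith)
  refine ⟨(3 + (1 - 2 ^ (-(r / p)))⁻¹) ^ p, by positivity, ?_⟩
  intro Ω _ _ X hX C₀ hC₀ hTriple hRight hLeft hae
  by_cases hint : Integrable fun ω => supNorm (fun v => X v ω) ^ p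
  · exact integral_supNorm_rpow_le_of_integrable hX hp.le hr hC₀.le hTriple
      (by simpa using hRight 0 le_rfl zero_le_one)
      (fun t ht => (hLeft t ht.1.le ht.2).trans
        (mul_le_of_le_one_right hC₀.le (Real.rpow_le_one ht.1.le ht.2 hr.le)))
      hae hint
  rw [integral_undef hint]
  have hW : 0 ≤ ∫ ω, ∫ t in (0 : ℝ)..1, ‖X t ω‖ ^ p :=
    integral_nonneg fun ω => intervalIntegral.integral_nonneg zero_le_one fun t _ => by positivity
  positivity

theorem stmt13 (k : ℕ) (p r μ : ℝ) (hp : 1 < p) (hr : 0 < r)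
    (hμ : μ ∈ Set.Ioo (0:ℝ) 1) (hμr : μ < r / p) :
    ∃ N : ℝ, 0 < N ∧
      ∀ {Ω : Type} [MeasureSpace Ω] [IsProbabilityMeasure (volume : Measure Ω)]
        (X : ℝ → Ω → EuclideanSpace ℝ (Fin k)),
        Measurable (fun q : ℝ × Ω => X q.1 q.2) →
        ∀ C₀ : ℝ, 0 < C₀ →
        (∀ s t u : ℝ, 0 ≤ s → s < t → t < u → u ≤ 1 →
          (∫ ω, tripleDelta (fun v => X v ω) s t u ^ p) ≤ C₀ * (u - s) ^ (1 + r)) →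
        (∀ t : ℝ, 0 ≤ t → t ≤ 1 →
          (∫ ω, dist (X 1 ω) (X t ω) ^ p) ≤ C₀ * (1 - t) ^ r) →
        (∀ t : ℝ, 0 ≤ t → t ≤ 1 →
          (∫ ω, dist (X 0 ω) (X t ω) ^ p) ≤ C₀ * t ^ r) →
        (∀ᵐ ω, MemDHolder μ (fun v => X v ω)) →
        (∫ ω, supNorm (fun v => X v ω) ^ p) ≤
          N * (C₀ + ∫ ω, ∫ t in (0:ℝ)..1, ‖X t ω‖ ^ p) :=
  stmt13_general k p r μ hp hr
end
end

section
/- Let f : [0,1] → ℝ^k be a function with finite left-endpoint Hölder seminorm |f]_μ = sup_{t∈(0,1]} |f(0)−f(t)|/t^μ, μ ∈ (0,1), p ≥ 1. Then sup_{0≤t≤1} |f(t)| ≤ 2·|f]_μ + ( ∫₀¹ |f(τ)|^p dτ )^{1/p}. -/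
open MeasureTheory Set Filter

noncomputable section

/-! Since `t ^ μ ≤ 1` on `(0,1]`, every value `f t` lies within `L = |f]_μ` of `f 0`. Hence
`‖f‖ ≤ ‖f 0‖ + L` on `[0,1]`, and `‖f‖ ≥ ‖f 0‖ - L` there, so that `‖f 0‖ - L` is at most the
`L^p` norm of `f` on `[0,1]`. -/

section LeftHolder

variable {E : Type*} [MetricSpace E] {μ : ℝ} {f : ℝ → E}

lemma leftSemi_nonneg (hfin : BddAbove (leftSet μ f)) : 0 ≤ leftSemi μ f :=
  (div_nonneg dist_nonneg (Real.rpow_nonneg zero_le_one μ)).trans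
    (le_csSup hfin ⟨1, one_pos, le_rfl, rfl⟩)

lemma dist_le_leftSemi_mul_rpow (hfin : BddAbove (leftSet μ f)) {t : ℝ} (ht₀ : 0 < t)
    (ht₁ : t ≤ 1) : dist (f 0) (f t) ≤ leftSemi μ f * t ^ μ :=
  (div_le_iff₀ (Real.rpow_pos_of_pos ht₀ μ)).1 (le_csSup hfin ⟨t, ht₀, ht₁, rfl⟩)

lemma dist_le_leftSemi (hμ : 0 ≤ μ) (hfin : BddAbove (leftSet μ f)) {t : ℝ} (ht : t ∈ Icc 0 1) :
    dist (f 0) (f t) ≤ leftSemi μ f := by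
  rcases ht.1.eq_or_lt with rfl | ht₀
  · simpa using leftSemi_nonneg hfin
  calc dist (f 0) (f t) ≤ leftSemi μ f * t ^ μ := dist_le_leftSemi_mul_rpow hfin ht₀ ht.2
    _ ≤ leftSemi μ f * 1 := by
      gcongr
      · exact leftSemi_nonneg hfin
      · exact Real.rpow_le_one ht₀.le ht.2 hμ
    _ = leftSemi μ f := mul_one _

end LeftHolder

lemma abs_norm_sub_norm_zero_le_leftSemi {E : Type*} [NormedAddCommGroup E] {μ : ℝ} {f : ℝ → E}
    (hμ : 0 ≤ μ) (hfin : BddAbove (leftSet μ f)) {t : ℝ} (ht : t ∈ Icc 0 1) :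
    |‖f t‖ - ‖f 0‖| ≤ leftSemi μ f := by
  calc |‖f t‖ - ‖f 0‖| ≤ ‖f t - f 0‖ := abs_norm_sub_norm_le _ _
    _ = dist (f 0) (f t) := by rw [dist_comm, dist_eq_norm]
    _ ≤ leftSemi μ f := dist_le_leftSemi hμ hfin ht

lemma supNorm_le {k : ℕ} {f : ℝ → EuclideanSpace ℝ (Fin k)} {M : ℝ}
    (h : ∀ t ∈ Icc (0 : ℝ) 1, ‖f t‖ ≤ M) : supNorm f ≤ M :=
  csSup_le ⟨‖f 0‖, 0, le_rfl, zero_le_one, rfl⟩ fun _ ⟨t, ht₀, ht₁, hx⟩ ↦ hx ▸ h t ⟨ht₀, ht₁⟩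

lemma intervalIntegrable_norm_rpow_of_norm_le {E : Type*} [NormedAddCommGroup E]
    [MeasurableSpace E] [OpensMeasurableSpace E] {f : ℝ → E} (hf : Measurable f) {a b p M : ℝ}
    (hp : 0 ≤ p) (h : ∀ τ ∈ uIcc a b, ‖f τ‖ ≤ M) :
    IntervalIntegrable (fun τ ↦ ‖f τ‖ ^ p) volume a b := by
  refine (intervalIntegrable_const (c := M ^ p)).mono_fun'
    (hf.norm.pow_const p).aestronglyMeasurable ?_
  refine ae_restrict_of_forall_mem measurableSet_uIoc fun τ hτ ↦ ?_
  show ‖‖f τ‖ ^ p‖ ≤ M ^ p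
  rw [Real.norm_of_nonneg (by positivity)]
  exact Real.rpow_le_rpow (norm_nonneg _) (h τ (uIoc_subset_uIcc hτ)) hp

lemma le_intervalIntegral_rpow_rpow_one_div {g : ℝ → ℝ} {c p : ℝ} (hp : 0 < p) (hc : 0 ≤ c)
    (hint : IntervalIntegrable (fun τ ↦ g τ ^ p) volume 0 1) (h : ∀ τ ∈ Icc (0 : ℝ) 1, c ≤ g τ) :
    c ≤ (∫ τ in (0 : ℝ)..1, g τ ^ p) ^ (1 / p) := by
  have hcp : c ^ p ≤ ∫ τ in (0 : ℝ)..1, g τ ^ p := by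
    simpa using intervalIntegral.integral_mono_on zero_le_one intervalIntegrable_const hint
      fun τ hτ ↦ Real.rpow_le_rpow hc (h τ hτ) hp.le
  calc c = (c ^ p) ^ (1 / p) := by rw [one_div, Real.rpow_rpow_inv hc hp.ne']
    _ ≤ _ := by gcongr

theorem stmt19 (k : ℕ) (f : ℝ → EuclideanSpace ℝ (Fin k)) (hf : Measurable f)
    (μ p : ℝ) (hμ : μ ∈ Set.Ioo (0:ℝ) 1) (hp : 1 ≤ p)
    (hfin : BddAbove (leftSet μ f)) :
    supNorm f ≤ 2 * leftSemi μ f + (∫ τ in (0:ℝ)..1, ‖f τ‖ ^ p) ^ (1 / p) := by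
  obtain ⟨hlower, hupper⟩ : (∀ t ∈ Icc (0 : ℝ) 1, ‖f 0‖ - leftSemi μ f ≤ ‖f t‖) ∧
      ∀ t ∈ Icc (0 : ℝ) 1, ‖f t‖ ≤ ‖f 0‖ + leftSemi μ f := by
    refine forall₂_and.1 fun t ht ↦ ?_
    have := abs_le.1 (abs_norm_sub_norm_zero_le_leftSemi hμ.1.le hfin ht)
    constructor <;> linarith
  have hint : IntervalIntegrable (fun τ ↦ ‖f τ‖ ^ p) volume 0 1 :=
    intervalIntegrable_norm_rpow_of_norm_le hf (by linarith) fun τ hτ ↦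
      hupper τ (by rwa [uIcc_of_le zero_le_one] at hτ)
  have hf0 : ‖f 0‖ - leftSemi μ f ≤ (∫ τ in (0:ℝ)..1, ‖f τ‖ ^ p) ^ (1 / p) :=
    (le_max_left _ 0).trans <| le_intervalIntegral_rpow_rpow_one_div (by linarith)
      (le_max_right _ _) hint fun τ hτ ↦ max_le (hlower τ hτ) (norm_nonneg _)
  exact supNorm_le fun t ht ↦ by linarith [hupper t ht]
end
end
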